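/- For every real α, ∫_0^∞ ((1 − α t)² + 1)² · √(2/π) · exp(−t²/2) dt = 3α⁴ − 8 b α³ + 8α² − 8 b α + 4, where b = √(2/π). Consequently the half Balakrishnan alpha skew normal density f_T(t; α) = ((1 − α t)² + 1)² ψ(t) / (3α⁴ − 8α³ b + 8α² − 8α b + 4), for t > 0, is a probability density on (0, ∞). -/

import Mathlib

open MeasureTheory

/-- The standard half-normal probability density function (for `t > 0`). -/
noncomputable def psi (t : ℝ) : ℝ := Real.sqrt (2 / Real.pi) * Real.exp (-t ^ 2 / 2)

lemma mom_int (n : ℕ) :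
    IntegrableOn (fun t : ℝ => t ^ n * Real.exp (-t ^ 2 / 2)) (Set.Ioi 0) := by
  have h := integrableOn_rpow_mul_exp_neg_mul_sq (b := 1/2) one_half_pos (s := (n : ℝ))
    (lt_of_lt_of_le neg_one_lt_zero (Nat.cast_nonneg n))
  refine h.congr_fun (fun x hx => ?_) measurableSet_Ioi
  dsimp only
  rw [Real.rpow_natCast, show -(1/2 : ℝ) * x ^ 2 = -x ^ 2 / 2 by ring]

lemma mom_val (n : ℕ) :
    ∫ t in Set.Ioi (0 : ℝ), t ^ n * Real.exp (-t ^ 2 / 2) =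
      (1/2 : ℝ) ^ (-((n : ℝ) + 1) / 2) * (1/2) * Real.Gamma (((n : ℝ) + 1) / 2) := by
  rw [← integral_rpow_mul_exp_neg_mul_rpow (p := 2) (q := (n : ℝ)) (b := 1/2) two_pos
    (lt_of_lt_of_le neg_one_lt_zero (Nat.cast_nonneg n)) one_half_pos]
  refine setIntegral_congr_fun measurableSet_Ioi (fun x hx => ?_)
  rw [Real.rpow_natCast, Real.rpow_two, show -(1/2 : ℝ) * x ^ 2 = -x ^ 2 / 2 by ring]

lemma rpow_half_aux (x : ℝ) : (1/2 : ℝ) ^ (x : ℝ) = (2 : ℝ) ^ (-x) := by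
  rw [one_div, Real.inv_rpow (by norm_num), ← Real.rpow_neg (by norm_num)]

lemma sqrt_pi_half : Real.sqrt 2 * Real.sqrt Real.pi / 2 = Real.sqrt (Real.pi / 2) := by
  have h0 : (0:ℝ) ≤ Real.sqrt 2 * Real.sqrt Real.pi / 2 := by positivity
  have hsq : (Real.sqrt 2 * Real.sqrt Real.pi / 2) ^ 2 = Real.pi / 2 := by
    rw [div_pow, mul_pow, Real.sq_sqrt (by norm_num : (0:ℝ) ≤ 2),
      Real.sq_sqrt Real.pi_pos.le]
    ring
  calc Real.sqrt 2 * Real.sqrt Real.pi / 2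
      = Real.sqrt ((Real.sqrt 2 * Real.sqrt Real.pi / 2) ^ 2) := (Real.sqrt_sq h0).symm
    _ = Real.sqrt (Real.pi / 2) := by rw [hsq]

lemma two_rpow_half : (2 : ℝ) ^ ((1:ℝ)/2) = Real.sqrt 2 := (Real.sqrt_eq_rpow 2).symm

lemma two_rpow_3half : (2 : ℝ) ^ ((3:ℝ)/2) = 2 * Real.sqrt 2 := by
  rw [show (3:ℝ)/2 = 1 + 1/2 by norm_num, Real.rpow_add (by norm_num), Real.rpow_one,
    two_rpow_half]

lemma two_rpow_5half : (2 : ℝ) ^ ((5:ℝ)/2) = 4 * Real.sqrt 2 := by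
  rw [show (5:ℝ)/2 = 2 + 1/2 by norm_num, Real.rpow_add (by norm_num), Real.rpow_two,
    two_rpow_half]
  norm_num

lemma gamma_3half : Real.Gamma (3/2) = Real.sqrt Real.pi / 2 := by
  rw [show (3/2 : ℝ) = 1/2 + 1 by norm_num, Real.Gamma_add_one (by norm_num),
    Real.Gamma_one_half_eq]
  ring

lemma gamma_5half : Real.Gamma (5/2) = 3 * Real.sqrt Real.pi / 4 := by
  rw [show (5/2 : ℝ) = 3/2 + 1 by norm_num, Real.Gamma_add_one (by norm_num), gamma_3half]
  ring

lemma mom0 : ∫ t in Set.Ioi (0 : ℝ), t ^ 0 * Real.exp (-t ^ 2 / 2) = Real.sqrt (Real.pi / 2) := by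
  rw [mom_val 0, show -(((0:ℕ):ℝ) + 1)/2 = (-(1/2) : ℝ) by norm_num,
    show (((0:ℕ):ℝ) + 1)/2 = (1/2 : ℝ) by norm_num, show ((-(1/2)):ℝ) = ((-(1/2)) : ℝ) from rfl]
  rw [show ((1:ℝ)/2) ^ (-(1/2) : ℝ) = (2:ℝ) ^ ((1:ℝ)/2) by
      rw [rpow_half_aux]; norm_num,
    two_rpow_half, Real.Gamma_one_half_eq, ← sqrt_pi_half]
  ring

lemma mom1 : ∫ t in Set.Ioi (0 : ℝ), t ^ 1 * Real.exp (-t ^ 2 / 2) = 1 := by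
  rw [mom_val 1, show -(((1:ℕ):ℝ) + 1)/2 = (-1 : ℝ) by norm_num,
    show (((1:ℕ):ℝ) + 1)/2 = (1 : ℝ) by norm_num, Real.rpow_neg_one, Real.Gamma_one]
  norm_num

lemma mom2 : ∫ t in Set.Ioi (0 : ℝ), t ^ 2 * Real.exp (-t ^ 2 / 2) = Real.sqrt (Real.pi / 2) := by
  rw [mom_val 2, show -(((2:ℕ):ℝ) + 1)/2 = -((3:ℝ)/2) by norm_num,
    show (((2:ℕ):ℝ) + 1)/2 = (3/2 : ℝ) by norm_num,
    show ((1:ℝ)/2) ^ (-((3:ℝ)/2)) = (2:ℝ) ^ ((3:ℝ)/2) by rw [rpow_half_aux]; norm_num,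
    two_rpow_3half, gamma_3half, ← sqrt_pi_half]
  ring

lemma mom3 : ∫ t in Set.Ioi (0 : ℝ), t ^ 3 * Real.exp (-t ^ 2 / 2) = 2 := by
  rw [mom_val 3, show -(((3:ℕ):ℝ) + 1)/2 = ((-2 : ℤ) : ℝ) by norm_num,
    show (((3:ℕ):ℝ) + 1)/2 = (2 : ℝ) by norm_num, Real.rpow_intCast, Real.Gamma_two]
  norm_num

lemma mom4 : ∫ t in Set.Ioi (0 : ℝ), t ^ 4 * Real.exp (-t ^ 2 / 2) =
    3 * Real.sqrt (Real.pi / 2) := by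
  rw [mom_val 4, show -(((4:ℕ):ℝ) + 1)/2 = -((5:ℝ)/2) by norm_num,
    show (((4:ℕ):ℝ) + 1)/2 = (5/2 : ℝ) by norm_num,
    show ((1:ℝ)/2) ^ (-((5:ℝ)/2)) = (2:ℝ) ^ ((5:ℝ)/2) by rw [rpow_half_aux]; norm_num,
    two_rpow_5half, gamma_5half, ← sqrt_pi_half]
  ring

theorem hbasn2_normalizing_constant (α : ℝ) :
    (∫ t in Set.Ioi (0 : ℝ), ((1 - α * t) ^ 2 + 1) ^ 2 * psi t) =
      3 * α ^ 4 - 8 * Real.sqrt (2 / Real.pi) * α ^ 3 + 8 * α ^ 2 -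
        8 * Real.sqrt (2 / Real.pi) * α + 4 ∧
    (∀ t : ℝ, 0 < t →
      0 ≤ ((1 - α * t) ^ 2 + 1) ^ 2 * psi t /
        (3 * α ^ 4 - 8 * Real.sqrt (2 / Real.pi) * α ^ 3 + 8 * α ^ 2 -
          8 * Real.sqrt (2 / Real.pi) * α + 4)) ∧
    (∫ t in Set.Ioi (0 : ℝ), ((1 - α * t) ^ 2 + 1) ^ 2 * psi t /
        (3 * α ^ 4 - 8 * Real.sqrt (2 / Real.pi) * α ^ 3 + 8 * α ^ 2 -
          8 * Real.sqrt (2 / Real.pi) * α + 4)) = 1 := by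
  set b : ℝ := Real.sqrt (2 / Real.pi) with hbdef
  have hbnonneg : 0 ≤ b := Real.sqrt_nonneg _
  have hbs : b * Real.sqrt (Real.pi / 2) = 1 := by
    rw [hbdef, ← Real.sqrt_mul (by positivity),
      show (2 / Real.pi) * (Real.pi / 2) = 1 by field_simp, Real.sqrt_one]
  have hψnonneg : ∀ t : ℝ, 0 ≤ psi t := fun t => by
    unfold psi; positivity
  have hexp : (fun t : ℝ => ((1 - α * t) ^ 2 + 1) ^ 2 * psi t) =
      fun t : ℝ => b * (α ^ 4 * (t ^ 4 * Real.exp (-t ^ 2 / 2)) +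
        (-4 * α ^ 3) * (t ^ 3 * Real.exp (-t ^ 2 / 2)) +
        8 * α ^ 2 * (t ^ 2 * Real.exp (-t ^ 2 / 2)) +
        (-8 * α) * (t ^ 1 * Real.exp (-t ^ 2 / 2)) +
        4 * (t ^ 0 * Real.exp (-t ^ 2 / 2))) := by
    funext t
    unfold psi
    rw [← hbdef]
    ring
  have h4 := (mom_int 4).const_mul (α ^ 4)
  have h3 := (mom_int 3).const_mul (-4 * α ^ 3)
  have h2 := (mom_int 2).const_mul (8 * α ^ 2)
  have h1' := (mom_int 1).const_mul (-8 * α)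
  have h0 := (mom_int 0).const_mul (4 : ℝ)
  have h43 : Integrable (fun x : ℝ => α ^ 4 * (x ^ 4 * Real.exp (-x ^ 2 / 2)) +
      -4 * α ^ 3 * (x ^ 3 * Real.exp (-x ^ 2 / 2))) (volume.restrict (Set.Ioi 0)) := h4.add h3
  have h432 : Integrable (fun x : ℝ => α ^ 4 * (x ^ 4 * Real.exp (-x ^ 2 / 2)) +
      -4 * α ^ 3 * (x ^ 3 * Real.exp (-x ^ 2 / 2)) +
      8 * α ^ 2 * (x ^ 2 * Real.exp (-x ^ 2 / 2))) (volume.restrict (Set.Ioi 0)) := h43.add h2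
  have h4321 : Integrable (fun x : ℝ => α ^ 4 * (x ^ 4 * Real.exp (-x ^ 2 / 2)) +
      -4 * α ^ 3 * (x ^ 3 * Real.exp (-x ^ 2 / 2)) +
      8 * α ^ 2 * (x ^ 2 * Real.exp (-x ^ 2 / 2)) +
      -8 * α * (x ^ 1 * Real.exp (-x ^ 2 / 2))) (volume.restrict (Set.Ioi 0)) := h432.add h1'
  have hsum : Integrable (fun x : ℝ => α ^ 4 * (x ^ 4 * Real.exp (-x ^ 2 / 2)) +
      -4 * α ^ 3 * (x ^ 3 * Real.exp (-x ^ 2 / 2)) +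
      8 * α ^ 2 * (x ^ 2 * Real.exp (-x ^ 2 / 2)) +
      -8 * α * (x ^ 1 * Real.exp (-x ^ 2 / 2)) +
      4 * (x ^ 0 * Real.exp (-x ^ 2 / 2))) (volume.restrict (Set.Ioi 0)) := h4321.add h0
  have hf : IntegrableOn (fun t : ℝ => ((1 - α * t) ^ 2 + 1) ^ 2 * psi t) (Set.Ioi 0) := by
    rw [hexp]; exact hsum.const_mul b
  have key : (∫ t in Set.Ioi (0 : ℝ), ((1 - α * t) ^ 2 + 1) ^ 2 * psi t) =
      3 * α ^ 4 - 8 * b * α ^ 3 + 8 * α ^ 2 - 8 * b * α + 4 := by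
    rw [hexp, integral_const_mul,
      integral_add h4321 h0,
      integral_add h432 h1',
      integral_add h43 h2,
      integral_add h4 h3,
      integral_const_mul, integral_const_mul, integral_const_mul, integral_const_mul,
      integral_const_mul, mom0, mom1, mom2, mom3, mom4]
    linear_combination (3 * α ^ 4 + 8 * α ^ 2 + 4) * hbs
  -- integral of psi alone is 1
  have hψint : IntegrableOn psi (Set.Ioi 0) := by
    have hb0 : IntegrableOn (fun t : ℝ => b * (t ^ 0 * Real.exp (-t ^ 2 / 2))) (Set.Ioi 0) :=
      (mom_int 0).const_mul b
    refine hb0.congr_fun (fun x hx => ?_) measurableSet_Ioi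
    unfold psi; rw [← hbdef]; ring
  have hψval : (∫ t in Set.Ioi (0 : ℝ), psi t) = 1 := by
    have : (fun t : ℝ => psi t) = fun t : ℝ => b * (t ^ 0 * Real.exp (-t ^ 2 / 2)) := by
      funext t; unfold psi; rw [← hbdef]; ring
    rw [this, integral_const_mul, mom0, hbs]
  have hmono : (∫ t in Set.Ioi (0 : ℝ), psi t) ≤
      ∫ t in Set.Ioi (0 : ℝ), ((1 - α * t) ^ 2 + 1) ^ 2 * psi t := by
    refine setIntegral_mono_on hψint hf measurableSet_Ioi (fun t ht => ?_)
    nlinarith [hψnonneg t, sq_nonneg (1 - α * t),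
      mul_nonneg (sq_nonneg (1 - α * t)) (hψnonneg t),
      mul_nonneg (mul_nonneg (sq_nonneg (1 - α * t)) (sq_nonneg (1 - α * t))) (hψnonneg t)]
  have hD : (1 : ℝ) ≤ 3 * α ^ 4 - 8 * b * α ^ 3 + 8 * α ^ 2 - 8 * b * α + 4 := by
    have h := hmono
    rw [hψval, key] at h
    exact h
  refine ⟨key, fun t ht => ?_, ?_⟩
  · exact div_nonneg (mul_nonneg (by positivity) (hψnonneg t)) (by linarith)
  · rw [integral_div, key, div_self (by linarith)]
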